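/- Let A ∈ ℝ₊^{r×s} have full column rank and x ∈ ℝ₊^r. Then the map (A', x') ↦ ‖x − A q(A', x')‖ is continuous at (A, x) on the set of full-column-rank nonnegative pairs; quantitatively, for (A', x') in suitable bounded neighborhoods, |‖x − A q(A',x')‖ − ‖x − A q(A,x)‖| ≤ 2(‖x − x'‖ + J₁J₂‖A − A'‖), where J₁ bounds the pseudoinverse norms of column-submatrices in the neighborhood and J₂ bounds ‖x'‖. -/

import Mathlib

/-!
On the support `T` of a nonnegative least squares solution `q` the residual `x - A q` is
orthogonal to the columns of `A_T`, so `q_T = A_T† x` and `‖q‖ ≤ J₁ ‖x‖`. The two optimality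
inequalities `‖x - A q‖ ≤ ‖x - A q'‖` and `‖x' - A' q'‖ ≤ ‖x' - A' q‖`, chained with the triangle
inequality, bound the change of the residual by `2 ‖x - x'‖ + ‖(A - A') q'‖ + ‖(A - A') q‖`, hence
by `2 (‖x - x'‖ + J₁ J₂ ‖A - A'‖)`, which tends to `0` at `(A, x)`.
-/
open Matrix

/-- Moore–Penrose pseudoinverse of a full-column-rank real matrix. -/
noncomputable def pinv {m n : Type*} [Fintype m] [Fintype n] [DecidableEq n]
    (A : Matrix m n ℝ) : Matrix n m ℝ := (Aᵀ * A)⁻¹ * Aᵀ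

/-- Spectral (ℓ²-operator) norm of a real matrix. -/
noncomputable def specNorm {m n : Type*} [Fintype m] [Fintype n] [DecidableEq m]
    [DecidableEq n] (M : Matrix m n ℝ) : ℝ :=
  ‖LinearMap.toContinuousLinearMap (Matrix.toEuclideanLin M)‖

/-- Euclidean norm of a vector. -/
noncomputable def euclid {n : Type*} [Fintype n] (v : n → ℝ) : ℝ :=
  Real.sqrt (∑ i, v i ^ 2)

/-- `v` is the nonnegative least squares solution for `A`, `x`. -/
def IsNNLS {r s : ℕ} (A : Matrix (Fin r) (Fin s) ℝ) (x : Fin r → ℝ) (v : Fin s → ℝ) : Prop :=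
  (∀ j, 0 ≤ v j) ∧
    ∀ w : Fin s → ℝ, (∀ j, 0 ≤ w j) →
      ∑ i, (x i - A.mulVec v i) ^ 2 ≤ ∑ i, (x i - A.mulVec w i) ^ 2

open Topology

section Norms

variable {m n : Type*} [Fintype m] [Fintype n]

lemma euclid_nonneg (v : n → ℝ) : 0 ≤ euclid v := Real.sqrt_nonneg _

lemma euclid_eq_norm (v : n → ℝ) : euclid v = ‖WithLp.toLp 2 v‖ := by
  simp [euclid, EuclideanSpace.norm_eq]

lemma euclid_sub_eq_dist (v w : n → ℝ) :
    euclid (v - w) = dist (WithLp.toLp 2 v) (WithLp.toLp 2 w) := by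
  simp [euclid, EuclideanSpace.dist_eq, Real.dist_eq, sq_abs]

@[fun_prop]
lemma continuous_euclid : Continuous (euclid : (n → ℝ) → ℝ) :=
  (continuous_norm.comp (PiLp.continuous_toLp 2 _)).congr fun v => (euclid_eq_norm v).symm

variable [DecidableEq m] [DecidableEq n]

lemma specNorm_nonneg (M : Matrix m n ℝ) : 0 ≤ specNorm M := norm_nonneg _

lemma specNorm_zero : specNorm (0 : Matrix m n ℝ) = 0 := by
  simp [specNorm]

-- `specNorm` is definitionally the norm of `Matrix.Norms.L2Operator`, whose topology is the
-- product topology.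
open scoped Matrix.Norms.L2Operator in
@[fun_prop]
lemma continuous_specNorm : Continuous (specNorm : Matrix m n ℝ → ℝ) := continuous_norm

lemma euclid_mulVec_le (M : Matrix m n ℝ) (v : n → ℝ) :
    euclid (M *ᵥ v) ≤ specNorm M * euclid v := by
  rw [euclid_eq_norm, euclid_eq_norm]
  exact (LinearMap.toContinuousLinearMap (toEuclideanLin M)).le_opNorm (WithLp.toLp 2 v)

end Norms

section PseudoInverse

variable {m n : Type*} [Fintype n]

lemma Matrix.mulVec_injective_of_rank_eq {A : Matrix m n ℝ} (h : A.rank = Fintype.card n) :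
    Function.Injective A.mulVec := by
  rw [mulVec_injective_iff, linearIndependent_iff_card_eq_finrank_span, ← h,
    rank_eq_finrank_span_cols]
  rfl

lemma Function.Injective.mulVec_submatrix_col {n₀ : Type*} [Fintype n₀] {A : Matrix m n ℝ}
    (hA : Function.Injective A.mulVec) {f : n₀ → n} (hf : Function.Injective f) :
    Function.Injective (A.submatrix id f).mulVec := by
  rw [mulVec_injective_iff] at hA ⊢
  exact hA.comp f hf

lemma Matrix.isUnit_transpose_mul_self [Fintype m] [DecidableEq n] {B : Matrix m n ℝ}
    (hB : Function.Injective B.mulVec) : IsUnit (Bᵀ * B) := by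
  rw [← mulVec_injective_iff_isUnit]
  refine LinearMap.ker_eq_bot (f := (Bᵀ * B).mulVecLin).mp ?_
  rw [ker_mulVecLin_transpose_mul_self]
  exact LinearMap.ker_eq_bot.mpr hB

lemma pinv_mulVec_eq_of_transpose_mulVec_sub_eq_zero [Fintype m] [DecidableEq n] {B : Matrix m n ℝ}
    (hB : Function.Injective B.mulVec) {x : m → ℝ} {u : n → ℝ}
    (h : Bᵀ *ᵥ (x - B *ᵥ u) = 0) : pinv B *ᵥ x = u := by
  have hnormal : (Bᵀ * B) *ᵥ u = Bᵀ *ᵥ x := by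
    rw [← mulVec_mulVec, eq_comm, ← sub_eq_zero, ← mulVec_sub, h]
  rw [pinv, ← mulVec_mulVec, ← hnormal, mulVec_mulVec,
    nonsing_inv_mul _ ((isUnit_iff_isUnit_det _).mp (isUnit_transpose_mul_self hB)), one_mulVec]

end PseudoInverse

lemma Finset.sum_univ_eq_sum_coe_of_eq_zero {ι M : Type*} [Fintype ι] [AddCommMonoid M]
    {T : Finset ι} {f : ι → M} (hf : ∀ j ∉ T, f j = 0) : ∑ j, f j = ∑ j : T, f j := by
  rw [Finset.sum_coe_sort]
  exact (Finset.sum_subset (Finset.subset_univ T) fun j _ hj => hf j hj).symm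

lemma abs_dist_sub_dist_le_of_isMinOn {S E : Type*} [PseudoMetricSpace E] {K : Set S}
    {f g : S → E} {a b : E} {s t : S} (hs : IsMinOn (fun u => dist a (f u)) K s)
    (ht : IsMinOn (fun u => dist b (g u)) K t) (hsK : s ∈ K) (htK : t ∈ K) :
    |dist a (f t) - dist a (f s)| ≤ 2 * dist a b + dist (f t) (g t) + dist (f s) (g s) := by
  have hst : dist a (f s) ≤ dist a (f t) := isMinOn_iff.mp hs t htK
  have hts : dist b (g t) ≤ dist b (g s) := isMinOn_iff.mp ht s hsK
  have h₁ := dist_triangle4 a b (g t) (f t)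
  have h₂ := dist_triangle4 b a (f s) (g s)
  rw [abs_of_nonneg (sub_nonneg.mpr hst)]
  linarith [dist_comm a b, dist_comm (g t) (f t)]

lemma continuousWithinAt_of_abs_sub_le {X : Type*} [TopologicalSpace X] {f g : X → ℝ}
    {s : Set X} {x : X} (hfg : ∀ᶠ y in 𝓝[s] x, |f y - f x| ≤ g y) (hg : ContinuousAt g x)
    (hgx : g x = 0) : ContinuousWithinAt f s x := by
  rw [ContinuousWithinAt, ← tendsto_sub_nhds_zero_iff]
  refine squeeze_zero_norm' (by simpa only [Real.norm_eq_abs] using hfg) ?_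
  exact hgx ▸ hg.tendsto.mono_left nhdsWithin_le_nhds

namespace IsNNLS

variable {r s : ℕ} {A : Matrix (Fin r) (Fin s) ℝ} {x : Fin r → ℝ} {q : Fin s → ℝ}

lemma isMinOn (hq : IsNNLS A x q) :
    IsMinOn (fun w => dist (WithLp.toLp 2 x) (WithLp.toLp 2 (A *ᵥ w))) {w | ∀ j, 0 ≤ w j} q :=
  isMinOn_iff.mpr fun w hw => by
    simp only [← euclid_sub_eq_dist]
    exact Real.sqrt_le_sqrt (hq.2 w hw)

lemma abs_euclid_residual_sub_le {A' : Matrix (Fin r) (Fin s) ℝ} {x' : Fin r → ℝ}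
    {q' : Fin s → ℝ} (hq : IsNNLS A x q) (hq' : IsNNLS A' x' q') :
    |euclid (x - A *ᵥ q') - euclid (x - A *ᵥ q)| ≤
      2 * euclid (x - x') + euclid ((A - A') *ᵥ q') + euclid ((A - A') *ᵥ q) := by
  simpa only [← euclid_sub_eq_dist, ← sub_mulVec] using
    abs_dist_sub_dist_le_of_isMinOn hq.isMinOn hq'.isMinOn hq.1 hq'.1

lemma transpose_mulVec_residual_eq_zero (hq : IsNNLS A x q) {j : Fin s} (hj : 0 < q j) :
    (Aᵀ *ᵥ (x - A *ᵥ q)) j = 0 := by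
  set φ : ℝ → ℝ := fun t => ∑ i, ((x - A *ᵥ q) i - t * A i j) ^ 2
  have hφ : ∀ t, φ t = ∑ i, (x i - (A *ᵥ (q + t • Pi.single j 1)) i) ^ 2 := fun t => by
    simp only [φ, mulVec_add, mulVec_smul, mulVec_single_one, Pi.sub_apply, Pi.add_apply,
      Pi.smul_apply, smul_eq_mul, col_apply, sub_sub, mul_comm t]
  have hmin : IsLocalMin φ 0 := by
    filter_upwards [Ioi_mem_nhds (neg_lt_zero.mpr hj)] with t ht
    rw [hφ, hφ, zero_smul, add_zero]
    refine hq.2 _ fun k => ?_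
    rcases eq_or_ne k j with rfl | hk
    · simp only [Pi.add_apply, Pi.smul_apply, Pi.single_eq_same, smul_eq_mul, mul_one]
      linarith [ht.out]
    · simpa [Pi.single_eq_of_ne hk] using hq.1 k
  have hderiv : HasDerivAt φ (-2 * (Aᵀ *ᵥ (x - A *ᵥ q)) j) 0 := by
    refine (HasDerivAt.fun_sum fun i _ =>
      ((hasDerivAt_mul_const (A i j)).const_sub ((x - A *ᵥ q) i)).fun_pow 2).congr_deriv ?_
    simp only [mulVec, dotProduct, transpose_apply, Finset.mul_sum]
    refine Finset.sum_congr rfl fun i _ => ?_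
    ring
  simpa using hmin.hasDerivAt_eq_zero hderiv

lemma euclid_le (hq : IsNNLS A x q) (hA : A.rank = s) {J : ℝ}
    (hJ : ∀ T : Finset (Fin s), T.Nonempty →
      specNorm (pinv (A.submatrix id (Subtype.val : {j // j ∈ T} → Fin s))) ≤ J)
    (hJ0 : 0 ≤ J) : euclid q ≤ J * euclid x := by
  set T : Finset (Fin s) := {j | 0 < q j}
  have hqT : ∀ j ∉ T, q j = 0 := fun j hj =>
    le_antisymm (not_lt.mp (by simpa [T] using hj)) (hq.1 j)
  rcases T.eq_empty_or_nonempty with hT | hT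
  · have hq0 : q = 0 := funext fun j => hqT j (hT ▸ Finset.notMem_empty j)
    simpa [hq0, euclid] using mul_nonneg hJ0 (euclid_nonneg x)
  set B := A.submatrix id (Subtype.val : T → Fin s)
  set u : T → ℝ := fun j => q j
  have hAq : A *ᵥ q = B *ᵥ u := funext fun i => by
    simp only [mulVec, dotProduct]
    exact Finset.sum_univ_eq_sum_coe_of_eq_zero fun j hj => by simp [hqT j hj]
  have hBinj : Function.Injective B.mulVec :=
    (mulVec_injective_of_rank_eq (by simpa using hA)).mulVec_submatrix_col Subtype.val_injective
  have hnormal : Bᵀ *ᵥ (x - B *ᵥ u) = 0 := funext fun j => by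
    rw [← hAq]
    exact hq.transpose_mulVec_residual_eq_zero (Finset.mem_filter.mp j.2).2
  calc euclid q = euclid u := by
        rw [euclid, euclid, Finset.sum_univ_eq_sum_coe_of_eq_zero (T := T) fun j hj => by
          simp [hqT j hj]]
    _ = euclid (pinv B *ᵥ x) := by rw [pinv_mulVec_eq_of_transpose_mulVec_sub_eq_zero hBinj hnormal]
    _ ≤ specNorm (pinv B) * euclid x := euclid_mulVec_le _ _
    _ ≤ J * euclid x := mul_le_mul_of_nonneg_right (hJ T hT) (euclid_nonneg x)

lemma euclid_mulVec_le_of_pinv_le (hq : IsNNLS A x q) (hA : A.rank = s) {J₁ J₂ : ℝ}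
    (hJ₁ : ∀ T : Finset (Fin s), T.Nonempty →
      specNorm (pinv (A.submatrix id (Subtype.val : {j // j ∈ T} → Fin s))) ≤ J₁)
    (hx : euclid x ≤ J₂) (M : Matrix (Fin r) (Fin s) ℝ) :
    euclid (M *ᵥ q) ≤ J₁ * J₂ * specNorm M := by
  rcases isEmpty_or_nonempty (Fin s) with hs | ⟨⟨j⟩⟩
  · simp [Subsingleton.elim M 0, specNorm_zero, euclid]
  have hJ₁0 : 0 ≤ J₁ := (specNorm_nonneg _).trans (hJ₁ {j} (Finset.singleton_nonempty j))
  calc euclid (M *ᵥ q) ≤ specNorm M * euclid q := euclid_mulVec_le M q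
    _ ≤ specNorm M * (J₁ * J₂) := mul_le_mul_of_nonneg_left
        ((hq.euclid_le hA hJ₁ hJ₁0).trans (mul_le_mul_of_nonneg_left hx hJ₁0)) (specNorm_nonneg M)
    _ = J₁ * J₂ * specNorm M := mul_comm _ _

end IsNNLS

theorem residual_norm_continuous_general {r s : ℕ}
    (Q : (Fin r → Fin s → ℝ) → (Fin r → ℝ) → (Fin s → ℝ))
    (hQ : ∀ B y, (∀ i j, 0 ≤ B i j) → (∀ i, 0 ≤ y i) → (Matrix.of B).rank = s →
      IsNNLS (Matrix.of B) y (Q B y))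
    (A : Fin r → Fin s → ℝ) (hA0 : ∀ i j, 0 ≤ A i j) (hArank : (Matrix.of A).rank = s)
    (x : Fin r → ℝ) (hx0 : ∀ i, 0 ≤ x i)
    (D : Set ((Fin r → Fin s → ℝ) × (Fin r → ℝ)))
    (hD : D = {p | (∀ i j, 0 ≤ p.1 i j) ∧ (∀ i, 0 ≤ p.2 i) ∧ (Matrix.of p.1).rank = s})
    (N : Set (Fin r → Fin s → ℝ)) (hN : N ∈ nhds A)
    (N' : Set (Fin r → ℝ)) (hN' : N' ∈ nhds x)
    (J₁ : ℝ)
    (hJ₁ : ∀ B ∈ closure N, ∀ T : Finset (Fin s), T.Nonempty →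
      specNorm (pinv ((Matrix.of B).submatrix id
        (Subtype.val : {j // j ∈ T} → Fin s))) ≤ J₁)
    (J₂ : ℝ) (hJ₂ : ∀ x' ∈ N', euclid x' ≤ J₂) :
    ContinuousWithinAt
        (fun p : (Fin r → Fin s → ℝ) × (Fin r → ℝ) =>
          euclid (fun i => x i - (Matrix.of A).mulVec (Q p.1 p.2) i)) D (A, x) ∧
      ∀ p ∈ (N ×ˢ N') ∩ D,
        |euclid (fun i => x i - (Matrix.of A).mulVec (Q p.1 p.2) i) -
            euclid (fun i => x i - (Matrix.of A).mulVec (Q A x) i)| ≤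
          2 * (euclid (fun i => x i - p.2 i) +
            J₁ * J₂ * specNorm (Matrix.of A - Matrix.of p.1)) := by
  have hq := hQ A x hA0 hx0 hArank
  have hbound : ∀ p ∈ (N ×ˢ N') ∩ D,
      |euclid (x - of A *ᵥ Q p.1 p.2) - euclid (x - of A *ᵥ Q A x)| ≤
        2 * (euclid (x - p.2) + J₁ * J₂ * specNorm (of A - of p.1)) := by
    rintro ⟨A', x'⟩ ⟨⟨hA'N, hx'N⟩, hp⟩
    obtain ⟨hA'0, hx'0, hA'rank⟩ := hD ▸ hp
    have hq' := hQ A' x' hA'0 hx'0 hA'rank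
    have h₁ := hq'.euclid_mulVec_le_of_pinv_le hA'rank (hJ₁ A' (subset_closure hA'N))
      (hJ₂ x' hx'N) (of A - of A')
    have h₂ := hq.euclid_mulVec_le_of_pinv_le hArank
      (hJ₁ A (subset_closure (mem_of_mem_nhds hN))) (hJ₂ x (mem_of_mem_nhds hN')) (of A - of A')
    linarith [hq.abs_euclid_residual_sub_le hq']
  have hcont : ContinuousAt (fun p : (Fin r → Fin s → ℝ) × (Fin r → ℝ) =>
      2 * (euclid (x - p.2) + J₁ * J₂ * specNorm (of A - of p.1))) (A, x) := by
    fun_prop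
  refine ⟨continuousWithinAt_of_abs_sub_le ?_ hcont (by simp [euclid, specNorm_zero]), hbound⟩
  filter_upwards [mem_nhdsWithin_of_mem_nhds (prod_mem_nhds hN hN'), self_mem_nhdsWithin]
    with p hpN hpD using hbound p ⟨hpN, hpD⟩

/-- continuity at `(A,x)` of `(A',x') ↦ ‖x − A q(A',x')‖` on the set of
full-column-rank nonnegative pairs, with the quantitative bound
`|‖x − A q(A',x')‖ − ‖x − A q(A,x)‖| ≤ 2(‖x − x'‖ + J₁J₂‖A − A'‖)` on suitable bounded
neighborhoods `N × N'`. -/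
theorem residual_norm_continuous {r s : ℕ} (hrs : s ≤ r)
    (Q : (Fin r → Fin s → ℝ) → (Fin r → ℝ) → (Fin s → ℝ))
    (hQ : ∀ B y, (∀ i j, 0 ≤ B i j) → (∀ i, 0 ≤ y i) → (Matrix.of B).rank = s →
      IsNNLS (Matrix.of B) y (Q B y))
    (A : Fin r → Fin s → ℝ) (hA0 : ∀ i j, 0 ≤ A i j) (hArank : (Matrix.of A).rank = s)
    (x : Fin r → ℝ) (hx0 : ∀ i, 0 ≤ x i)
    (D : Set ((Fin r → Fin s → ℝ) × (Fin r → ℝ)))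
    (hD : D = {p | (∀ i j, 0 ≤ p.1 i j) ∧ (∀ i, 0 ≤ p.2 i) ∧ (Matrix.of p.1).rank = s})
    (N : Set (Fin r → Fin s → ℝ)) (hN : N ∈ nhds A) (hNbd : Bornology.IsBounded N)
    (hNcl : ∀ B ∈ closure N, (∀ i j, 0 ≤ B i j) ∧ (Matrix.of B).rank = s)
    (N' : Set (Fin r → ℝ)) (hN' : N' ∈ nhds x) (hN'bd : Bornology.IsBounded N')
    (J₁ : ℝ)
    (hJ₁ : ∀ B ∈ closure N, ∀ T : Finset (Fin s), T.Nonempty →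
      specNorm (pinv ((Matrix.of B).submatrix id
        (Subtype.val : {j // j ∈ T} → Fin s))) ≤ J₁)
    (J₂ : ℝ) (hJ₂ : ∀ x' ∈ N', euclid x' ≤ J₂) :
    ContinuousWithinAt
        (fun p : (Fin r → Fin s → ℝ) × (Fin r → ℝ) =>
          euclid (fun i => x i - (Matrix.of A).mulVec (Q p.1 p.2) i)) D (A, x) ∧
      ∀ p ∈ (N ×ˢ N') ∩ D,
        |euclid (fun i => x i - (Matrix.of A).mulVec (Q p.1 p.2) i) -
            euclid (fun i => x i - (Matrix.of A).mulVec (Q A x) i)| ≤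
          2 * (euclid (fun i => x i - p.2 i) +
            J₁ * J₂ * specNorm (Matrix.of A - Matrix.of p.1)) :=
  residual_norm_continuous_general Q hQ A hA0 hArank x hx0 D hD N hN N' hN' J₁ hJ₁ J₂ hJ₂
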